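/- In the setting of the switching rule: with B > 0, ε ≥ 0, δ ∈ [0, 1], random variables G, H, Ĝ, Ĥ ∈ [0, B], constant Opt ∈ [0, B], an event 𝓔 with P[𝓔] ≥ 1 − δ on which |G − Ĝ| ≤ ε, |H − Ĥ| ≤ ε, and Opt − H ≤ ε, the switching event 𝓒 = {Ĝ + ε + Bδ ≤ (1 − δ)(Ĥ − ε)}, and selected profit S = H on 𝓒, S = G on 𝓒ᶜ, the expected per-round regret satisfies Opt − E[S] ≤ 5ε + 4Bδ. -/

import Mathlib

open MeasureTheory ProbabilityTheory

/-- Switching rule, part 2: in the same setting, the expected per-round regret of the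
selected profit is bounded: `Opt − E[S] ≤ 5ε + 4Bδ`. -/
theorem switching_rule_regret {Ω : Type*} [MeasureSpace Ω]
    [IsProbabilityMeasure (ℙ : Measure Ω)]
    (B ε δ : ℝ) (hB : 0 < B) (hε : 0 ≤ ε) (hδ0 : 0 ≤ δ) (hδ1 : δ ≤ 1)
    (G H Gh Hh : Ω → ℝ)
    (hGm : Measurable G) (hHm : Measurable H) (hGhm : Measurable Gh) (hHhm : Measurable Hh)
    (hGr : ∀ ω, G ω ∈ Set.Icc 0 B) (hHr : ∀ ω, H ω ∈ Set.Icc 0 B)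
    (hGi : Integrable G) (hHi : Integrable H)
    (Opt : ℝ) (hOpt : Opt ∈ Set.Icc 0 B)
    (E : Set Ω) (hEm : MeasurableSet E) (hE : ENNReal.ofReal (1 - δ) ≤ ℙ E)
    (hGE : ∀ ω ∈ E, |G ω - Gh ω| ≤ ε) (hHE : ∀ ω ∈ E, |H ω - Hh ω| ≤ ε)
    (hOE : ∀ ω ∈ E, Opt - H ω ≤ ε) :
    Opt - ∫ ω, (if Gh ω + ε + B * δ ≤ (1 - δ) * (Hh ω - ε) then H ω else G ω)
      ≤ 5 * ε + 4 * B * δ := by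
  classical
  set C : Set Ω := {ω | Gh ω + ε + B * δ ≤ (1 - δ) * (Hh ω - ε)} with hCdef
  have hCm : MeasurableSet C := by
    apply measurableSet_le <;> measurability
  set S : Ω → ℝ := fun ω => if Gh ω + ε + B * δ ≤ (1 - δ) * (Hh ω - ε) then H ω else G ω
    with hSdef
  have hSeq : S = C.piecewise H G := by
    funext ω; simp [hSdef, Set.piecewise, hCdef, Set.mem_setOf_eq]
  have hSi : Integrable S := by
    rw [hSeq]
    exact Integrable.piecewise hCm hHi.integrableOn hGi.integrableOn
  -- pointwise bound function
  set b : Ω → ℝ := fun ω => if ω ∈ E then 5 * ε + 2 * B * δ else B with hbdef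
  have hbeq : b = E.piecewise (fun _ => 5 * ε + 2 * B * δ) (fun _ => B) := by
    funext ω; simp [hbdef, Set.piecewise]
  have hbi : Integrable b := by
    rw [hbeq]
    exact Integrable.piecewise hEm (integrable_const _).integrableOn
      (integrable_const _).integrableOn
  have hpt : ∀ ω, Opt - S ω ≤ b ω := by
    intro ω
    by_cases hωE : ω ∈ E
    · simp only [hbdef, if_pos hωE]
      by_cases hωC : Gh ω + ε + B * δ ≤ (1 - δ) * (Hh ω - ε)
      · have h1 := hOE ω hωE
        have : S ω = H ω := by simp [hSdef, if_pos hωC]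
        rw [this]
        nlinarith [hB.le]
      · have : S ω = G ω := by simp [hSdef, if_neg hωC]
        rw [this]
        have h1 := hOE ω hωE
        have h2 := abs_le.mp (hGE ω hωE)
        have h3 := abs_le.mp (hHE ω hωE)
        have h4 : ¬ (Gh ω + ε + B * δ ≤ (1 - δ) * (Hh ω - ε)) := hωC
        push_neg at h4
        have h5 : Hh ω - ε ≤ H ω := by linarith [h3.2]
        have h6 : H ω ≤ B := (hHr ω).2
        -- Opt - G ω ≤ 5ε + 2Bδ
        nlinarith [h2.1, h2.2, h3.1, h3.2]
    · simp only [hbdef, if_neg hωE]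
      have hS0 : 0 ≤ S ω := by
        simp only [hSdef]
        split
        · exact (hHr ω).1
        · exact (hGr ω).1
      linarith [hOpt.2]
  have hsub : Integrable (fun ω => Opt - S ω) := (integrable_const Opt).sub hSi
  have hmono : ∫ ω, (Opt - S ω) ≤ ∫ ω, b ω := integral_mono hsub hbi hpt
  have hIconst : ∫ (_ : Ω), Opt ∂ℙ = Opt := by simp
  have hIsub : ∫ ω, (Opt - S ω) = Opt - ∫ ω, S ω := by
    rw [integral_sub (integrable_const Opt) hSi, hIconst]
  -- compute ∫ b
  have hPEc : (ℙ Eᶜ).toReal ≤ δ := by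
    have h1 : ℙ Eᶜ = 1 - ℙ E := by
      rw [measure_compl hEm (measure_ne_top _ _), measure_univ]
    have h2 : (1 : ℝ) - δ ≤ (ℙ E).toReal := by
      have := ENNReal.toReal_mono (measure_ne_top ℙ E) hE
      rwa [ENNReal.toReal_ofReal (by linarith)] at this
    have h3 : (ℙ Eᶜ).toReal = 1 - (ℙ E).toReal := by
      rw [h1, ENNReal.toReal_sub_of_le prob_le_one ENNReal.one_ne_top, ENNReal.toReal_one]
    linarith
  have hPE : (ℙ E).toReal ≤ 1 := by
    have := prob_le_one (μ := (ℙ : Measure Ω)) (s := E)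
    exact_mod_cast ENNReal.toReal_mono ENNReal.one_ne_top this |>.trans_eq ENNReal.toReal_one
  have hIb : ∫ ω, b ω = (ℙ E).toReal * (5 * ε + 2 * B * δ) + (ℙ Eᶜ).toReal * B := by
    have : b = Set.indicator E (fun _ => 5 * ε + 2 * B * δ) +
        Set.indicator Eᶜ (fun _ => B) := by
      funext ω
      by_cases hωE : ω ∈ E <;>
        simp [hbdef, Set.indicator, hωE]
    rw [this]
    simp only [Pi.add_apply]
    rw [integral_add ((integrable_const _).indicator hEm)
      ((integrable_const _).indicator hEm.compl),
      integral_indicator_const _ hEm, integral_indicator_const _ hEm.compl]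
    simp [smul_eq_mul, mul_comm]
    rfl
  have hbnd : ∫ ω, b ω ≤ 5 * ε + 4 * B * δ := by
    rw [hIb]
    have h0 : (0:ℝ) ≤ 5 * ε + 2 * B * δ := by nlinarith
    have h1 : (ℙ E).toReal * (5 * ε + 2 * B * δ) ≤ 5 * ε + 2 * B * δ := by
      nlinarith [ENNReal.toReal_nonneg (a := ℙ E)]
    have h2 : (ℙ Eᶜ).toReal * B ≤ δ * B := by
      nlinarith [ENNReal.toReal_nonneg (a := ℙ Eᶜ)]
    nlinarith
  calc Opt - ∫ ω, S ω = ∫ ω, (Opt - S ω) := hIsub.symm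
    _ ≤ ∫ ω, b ω := hmono
    _ ≤ 5 * ε + 4 * B * δ := hbnd
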